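/- arXiv:2507.16622 — 2 statements merged into one kernel-verified Lean document; each statement's English description precedes it below -/
import Mathlib

section
/- There exists a finite connected simple graph G with mob(G) = a and mobmv(G) = b if and only if a = b = 1 or 2 ≤ a ≤ b. -/
open SimpleGraph

variable {V : Type*} {W : Type*}

/-- `S` is a general position set of `G`: no shortest path of `G` contains more than two
vertices of `S`. -/
def IsGenPosSet (G : SimpleGraph V) (S : Set V) : Prop :=
  ∀ ⦃u v : V⦄ (p : G.Walk u v), p.IsPath → p.length = G.dist u v →
    (S ∩ {x | x ∈ p.support}).ncard ≤ 2

/-- `S` is a mutual visibility set of `G`: any two vertices of `S` are joined by a shortest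
path containing no further vertex of `S`. -/
def IsMutVisSet (G : SimpleGraph V) (S : Set V) : Prop :=
  ∀ ⦃u⦄, u ∈ S → ∀ ⦃v⦄, v ∈ S → ∃ p : G.Walk u v,
    p.IsPath ∧ p.length = G.dist u v ∧ ∀ x ∈ p.support, x ∈ S → x = u ∨ x = v

/-- A legal move (with respect to the position property `P`) of a configuration of `t` robots
on distinct vertices: one robot moves to an adjacent unoccupied vertex, and the resulting set
of occupied vertices again satisfies `P`. -/
def LegalMove (G : SimpleGraph V) (P : Set V → Prop) {t : ℕ} (f g : Fin t ↪ V) : Prop :=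
  ∃ i : Fin t, G.Adj (f i) (g i) ∧ g i ∉ Set.range ⇑f ∧ (∀ j, j ≠ i → g j = f j) ∧
    P (Set.range ⇑g)

/-- A configuration is a mobile `P`-configuration if it satisfies `P` and there is a sequence
of legal moves starting from it such that every vertex is visited by some robot. -/
def IsMobileConfig (G : SimpleGraph V) (P : Set V → Prop) {t : ℕ} (f : Fin t ↪ V) : Prop :=
  P (Set.range ⇑f) ∧ ∃ (N : ℕ) (c : ℕ → (Fin t ↪ V)), c 0 = f ∧
    (∀ k < N, LegalMove G P (c k) (c (k + 1))) ∧ ∀ v : V, ∃ k ≤ N, ∃ i, c k i = v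

/-- A configuration is completely mobile if it is mobile and moreover every robot can visit
every vertex via a sequence of legal moves. -/
def IsCompletelyMobileConfig (G : SimpleGraph V) (P : Set V → Prop) {t : ℕ}
    (f : Fin t ↪ V) : Prop :=
  IsMobileConfig G P f ∧ ∀ (v : V) (i : Fin t), ∃ (N : ℕ) (c : ℕ → (Fin t ↪ V)), c 0 = f ∧
    (∀ k < N, LegalMove G P (c k) (c (k + 1))) ∧ ∃ k ≤ N, c k i = v

/-- The mobile general position number `mob(G)`. -/
noncomputable def mobGP (G : SimpleGraph V) : ℕ :=
  sSup {t : ℕ | ∃ f : Fin t ↪ V, IsMobileConfig G (IsGenPosSet G) f}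

/-- The completely mobile general position number `mob*(G)`. -/
noncomputable def cmobGP (G : SimpleGraph V) : ℕ :=
  sSup {t : ℕ | ∃ f : Fin t ↪ V, IsCompletelyMobileConfig G (IsGenPosSet G) f}

/-- The mobile mutual visibility number `mobmv(G)`. -/
noncomputable def mobMV (G : SimpleGraph V) : ℕ :=
  sSup {t : ℕ | ∃ f : Fin t ↪ V, IsMobileConfig G (IsMutVisSet G) f}

/-- The completely mobile mutual visibility number `mobmv*(G)`. -/
noncomputable def cmobMV (G : SimpleGraph V) : ℕ :=
  sSup {t : ℕ | ∃ f : Fin t ↪ V, IsCompletelyMobileConfig G (IsMutVisSet G) f}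

/-- The mutual visibility number `μ(G)`. -/
noncomputable def muMV (G : SimpleGraph V) : ℕ :=
  sSup {n : ℕ | ∃ S : Set V, IsMutVisSet G S ∧ S.ncard = n}

/-- `μ₂(G)`: the largest cardinality of a mutual visibility set whose vertices are pairwise at
distance at most `2`. -/
noncomputable def muMV2 (G : SimpleGraph V) : ℕ :=
  sSup {n : ℕ | ∃ S : Set V, IsMutVisSet G S ∧ (∀ u ∈ S, ∀ v ∈ S, G.dist u v ≤ 2) ∧
    S.ncard = n}

/-- The join `G ∨ H` of two graphs: the disjoint union together with all edges between the
two vertex sets. -/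
def graphJoin (G : SimpleGraph V) (H : SimpleGraph W) : SimpleGraph (V ⊕ W) where
  Adj x y := match x, y with
    | Sum.inl a, Sum.inl b => G.Adj a b
    | Sum.inr a, Sum.inr b => H.Adj a b
    | Sum.inl _, Sum.inr _ => True
    | Sum.inr _, Sum.inl _ => True
  symm := by constructor; rintro (a | a) (b | b) h <;> simp_all <;> exact h.symm
  loopless := by constructor; rintro (a | a) h <;> simp_all

/-- The strong product `G ⊠ H` of two graphs. -/
def strongProd (G : SimpleGraph V) (H : SimpleGraph W) : SimpleGraph (V × W) where
  Adj x y := (x.1 = y.1 ∧ H.Adj x.2 y.2) ∨ (x.2 = y.2 ∧ G.Adj x.1 y.1) ∨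
    (G.Adj x.1 y.1 ∧ H.Adj x.2 y.2)
  symm := by
    constructor
    rintro ⟨a, b⟩ ⟨c, d⟩ (⟨h1, h2⟩ | ⟨h1, h2⟩ | ⟨h1, h2⟩)
    · exact Or.inl ⟨h1.symm, h2.symm⟩
    · exact Or.inr (Or.inl ⟨h1.symm, h2.symm⟩)
    · exact Or.inr (Or.inr ⟨h1.symm, h2.symm⟩)
  loopless := by constructor; rintro ⟨a, b⟩ (⟨_, h⟩ | ⟨_, h⟩ | ⟨h, _⟩) <;> simp_all

/-- A vertex `u` is a hub if any two distinct non-adjacent vertices different from `u` are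
both adjacent to `u`. -/
def IsHub (G : SimpleGraph V) (u : V) : Prop :=
  ∀ ⦃w₁ w₂ : V⦄, w₁ ≠ u → w₂ ≠ u → w₁ ≠ w₂ → ¬G.Adj w₁ w₂ → G.Adj w₁ u ∧ G.Adj w₂ u

/-- A block graph: every block is complete; equivalently, the vertices of any cycle form a
clique. -/
def IsBlockGraph (G : SimpleGraph V) : Prop :=
  ∀ (v : V) (c : G.Walk v v), c.IsCycle → G.IsClique {x | x ∈ c.support}

/-- The graph obtained from the complete graph `K n` (on vertices `1, ..., n`) by attaching
one pendant vertex `0`, adjacent only to vertex `1`. -/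
def cliqueWithLeaf (n : ℕ) : SimpleGraph (Fin (n + 1)) :=
  SimpleGraph.fromRel (fun i j => (i ≠ 0 ∧ j ≠ 0) ∨ (i = 0 ∧ j = 1))

/-- `G` is (isomorphic to) a path graph. -/
def IsPathGraph (G : SimpleGraph V) : Prop :=
  ∃ n : ℕ, Nonempty (G ≃g pathGraph n)

/-!
Any set of at most two vertices is in general position, so in a connected graph one or two robots
can be driven anywhere along walks; since general position sets are mutual-visibility sets, this
gives `1 ≤ mob(G) ≤ mobmv(G)` and excludes `mob(G) = 1 < mobmv(G)`.

Complete graphs realise `a = b`. For `2 ≤ a < b` take the complete split graph `K_a ∨ mK_1` with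
`m = b - a + 1`. In general position, a set meeting the clique contains at most one independent
vertex. Robots on the whole clique are mobile: one at a time steps out to an independent vertex and
back. More than `a` robots in general position neither occupy every vertex nor can move: such a
configuration meeting the clique contains all of it, while one end of any move is a clique vertex,
which the configuration before or after the move does not contain.
For mutual visibility, robots on all vertices but one clique vertex `x₀` are mobile (any
independent pair sees each other through `x₀`), while all `a + m` vertices are not.
-/

open Set Function

namespace SimpleGraph.Walk

variable {G : SimpleGraph V} {u v : V}

lemma ncard_support_le (p : G.Walk u v) : {x | x ∈ p.support}.ncard ≤ p.length + 1 := by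
  classical
  rw [← List.coe_toFinset, ncard_coe_finset, ← p.length_support]
  exact p.support.toFinset_card_le

lemma ncard_inter_support_le (S : Set V) (p : G.Walk u v) :
    (S ∩ {x | x ∈ p.support}).ncard ≤ p.length + 1 :=
  (ncard_le_ncard inter_subset_right p.support.finite_toSet).trans p.ncard_support_le

lemma ncard_inter_support_le_length {S : Set V} (p : G.Walk u v) {z : V} (hz : z ∈ p.support)
    (hzS : z ∉ S) : (S ∩ {x | x ∈ p.support}).ncard ≤ p.length := by
  have hsub : S ∩ {x | x ∈ p.support} ⊆ {x | x ∈ p.support} \ {z} :=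
    fun x hx => ⟨hx.2, by rintro rfl; exact hzS hx.1⟩
  have := ncard_sdiff_singleton_lt_of_mem (s := {x | x ∈ p.support}) hz p.support.finite_toSet
  have := ncard_le_ncard hsub (p.support.finite_toSet.sdiff)
  have := p.ncard_support_le
  omega

end SimpleGraph.Walk

section PositionSets

variable {G : SimpleGraph V} {S : Set V}

lemma isGenPosSet_of_ncard_le_two (hS : S.Finite) (h : S.ncard ≤ 2) : IsGenPosSet G S :=
  fun _ _ _ _ _ => (ncard_le_ncard inter_subset_left hS).trans h

lemma isGenPosSet_top (S : Set V) : IsGenPosSet (⊤ : SimpleGraph V) S := by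
  intro u v p _ hp
  have : p.length ≤ 1 := by
    rcases eq_or_ne u v with rfl | huv
    · simp [hp]
    · rw [hp, dist_top_of_ne huv]
  exact (p.ncard_inter_support_le S).trans (by omega)

lemma IsGenPosSet.isMutVisSet (hG : G.Connected) (hS : IsGenPosSet G S) : IsMutVisSet G S := by
  intro u hu v hv
  rcases eq_or_ne u v with rfl | huv
  · exact ⟨.nil, .nil, by simp, by simp⟩
  obtain ⟨p, hp, hlen⟩ := hG.exists_path_of_dist u v
  refine ⟨p, hp, hlen, fun x hx hxS => ?_⟩
  by_contra! hne
  have : 2 < (S ∩ {x | x ∈ p.support}).ncard :=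
    (two_lt_ncard_iff (p.support.finite_toSet.inter_of_right S)).2
      ⟨u, v, x, ⟨hu, p.start_mem_support⟩, ⟨hv, p.end_mem_support⟩, ⟨hxS, hx⟩,
        huv, Ne.symm hne.1, Ne.symm hne.2⟩
  exact (hS p hp hlen).not_gt this

end PositionSets

section Robots

variable {G : SimpleGraph V} {P Q : Set V → Prop} {t : ℕ}

lemma range_eq_insert_sdiff {ι : Type*} {f g : ι ↪ V} {i : ι}
    (hfix : ∀ j, j ≠ i → g j = f j) : range g = insert (g i) (range f \ {f i}) := by
  ext y
  constructor
  · rintro ⟨j, rfl⟩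
    by_cases hj : j = i
    · exact hj ▸ mem_insert _ _
    · exact mem_insert_of_mem _ ⟨⟨j, (hfix j hj).symm⟩, by simpa [hfix j hj] using hj⟩
  · rintro (rfl | ⟨⟨j, rfl⟩, hj⟩)
    · exact mem_range_self i
    · exact ⟨j, hfix j (by rintro rfl; exact hj rfl)⟩

lemma exists_legalMove {f : Fin t ↪ V} {i : Fin t} {x : V} (hadj : G.Adj (f i) x)
    (hx : x ∉ range f) : ∃ g : Fin t ↪ V, g i = x ∧ range g = insert x (range f \ {f i}) ∧
      (P (range g) → LegalMove G P f g) := by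
  classical
  have hfix : ∀ j, j ≠ i → f.setValue i x j = f j :=
    fun j hj => Embedding.setValue_eq_of_ne hj fun h => hx ⟨j, h⟩
  have hx' := f.setValue_eq i x
  refine ⟨f.setValue i x, hx', ?_, fun hP => ⟨i, by rwa [hx'], by rwa [hx'], hfix, hP⟩⟩
  rw [range_eq_insert_sdiff hfix, hx']

lemma LegalMove.symm {f g : Fin t ↪ V} (h : LegalMove G P f g) (hf : P (range f)) :
    LegalMove G P g f := by
  obtain ⟨i, hadj, hfree, hfix, -⟩ := h
  refine ⟨i, hadj.symm, ?_, fun j hj => (hfix j hj).symm, hf⟩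
  rw [range_eq_insert_sdiff hfix]
  rintro (h | ⟨-, h⟩)
  · exact hadj.ne h
  · exact h rfl

lemma LegalMove.mono (hPQ : ∀ S, P S → Q S) {f g : Fin t ↪ V} (h : LegalMove G P f g) :
    LegalMove G Q f g :=
  let ⟨i, hadj, hfree, hfix, hP⟩ := h
  ⟨i, hadj, hfree, hfix, hPQ _ hP⟩

lemma IsMobileConfig.mono (hPQ : ∀ S, P S → Q S) {f : Fin t ↪ V} (h : IsMobileConfig G P f) :
    IsMobileConfig G Q f :=
  let ⟨hf, N, c, hc0, hleg, hcov⟩ := h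
  ⟨hPQ _ hf, N, c, hc0, fun k hk => (hleg k hk).mono hPQ, hcov⟩

/-- `Reaches G P f g A`: a sequence of legal moves leads from `f` to `g` and visits every vertex
of `A`. -/
inductive Reaches (G : SimpleGraph V) (P : Set V → Prop) :
    (Fin t ↪ V) → (Fin t ↪ V) → Set V → Prop
  | refl {f : Fin t ↪ V} {A : Set V} : A ⊆ range f → Reaches G P f f A
  | head {f g h : Fin t ↪ V} {A B : Set V} : LegalMove G P f g → Reaches G P g h B →
      A ⊆ range f ∪ B → Reaches G P f h A

namespace Reaches

variable {f g h : Fin t ↪ V} {A B : Set V}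

lemma mono (hfg : Reaches G P f g A) (hBA : B ⊆ A) : Reaches G P f g B := by
  cases hfg with
  | refl hA => exact refl (hBA.trans hA)
  | head hfg hgh hA => exact head hfg hgh (hBA.trans hA)

lemma range_union (hfg : Reaches G P f g A) : Reaches G P f g (range f ∪ A) := by
  cases hfg with
  | refl hA => exact refl (union_subset subset_rfl hA)
  | head hfg hgh hA => exact head hfg hgh (union_subset subset_union_left hA)

lemma trans (hfg : Reaches G P f g A) (hgh : Reaches G P g h B) : Reaches G P f h (A ∪ B) := by
  induction hfg with
  | refl hA => exact hgh.range_union.mono (union_subset_union_left _ hA)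
  | head hfg _ hA ih =>
    exact head hfg (ih hgh) <| union_subset
      (hA.trans (union_subset_union_right _ subset_union_left))
      (subset_union_right.trans subset_union_right)

lemma exists_seq (hfg : Reaches G P f g A) : ∃ (N : ℕ) (c : ℕ → (Fin t ↪ V)), c 0 = f ∧
    (∀ k < N, LegalMove G P (c k) (c (k + 1))) ∧ ∀ v ∈ A, ∃ k ≤ N, ∃ i, c k i = v := by
  induction hfg with
  | @refl f A hA => exact ⟨0, fun _ => f, rfl, by simp, fun v hv => ⟨0, le_rfl, hA hv⟩⟩
  | @head f g h A B hfg _ hA ih =>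
    obtain ⟨N, c, hc0, hleg, hcov⟩ := ih
    refine ⟨N + 1, fun | 0 => f | k + 1 => c k, rfl, ?_, fun v hv => ?_⟩
    · rintro (_ | k) hk
      · simpa [hc0] using hfg
      · exact hleg k (by omega)
    · rcases hA hv with ⟨i, rfl⟩ | hvB
      · exact ⟨0, by omega, i, rfl⟩
      · obtain ⟨k, hk, i, rfl⟩ := hcov v hvB
        exact ⟨k + 1, by omega, i, rfl⟩

lemma isMobileConfig (hfg : Reaches G P f g univ) (hf : P (range f)) : IsMobileConfig G P f :=
  let ⟨N, c, hc0, hleg, hcov⟩ := hfg.exists_seq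
  ⟨hf, N, c, hc0, hleg, fun v => hcov v (mem_univ v)⟩

end Reaches

lemma exists_reaches_univ [Finite V] (C : Set (Fin t ↪ V))
    (hC : ∀ f ∈ C, ∀ v, ∃ g ∈ C, Reaches G P f g {v}) {f : Fin t ↪ V} (hf : f ∈ C) :
    ∃ g, Reaches G P f g univ := by
  classical
  have := Fintype.ofFinite V
  suffices ∀ s : Finset V, ∃ g ∈ C, Reaches G P f g s by
    obtain ⟨g, -, hg⟩ := this Finset.univ
    exact ⟨g, by simpa using hg⟩
  intro s
  induction s using Finset.induction_on with
  | empty => exact ⟨f, hf, .refl (by simp)⟩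
  | insert v s _ ih =>
    obtain ⟨g, hgC, hfg⟩ := ih
    obtain ⟨h, hhC, hgh⟩ := hC g hgC v
    exact ⟨h, hhC, (hfg.trans hgh).mono (by rw [Finset.coe_insert, insert_eq, union_comm])⟩

lemma exists_reaches_of_walk (hP : ∀ g : Fin t ↪ V, P (range g)) {u v : V} (p : G.Walk u v)
    (f : Fin t ↪ V) (i : Fin t) (hi : f i = u) : ∃ g, Reaches G P f g {v} := by
  induction p generalizing f i with
  | nil => exact ⟨f, .refl (singleton_subset_iff.2 ⟨i, hi⟩)⟩
  | @cons u w v hadj q ih =>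
    by_cases hw : w ∈ range f
    · obtain ⟨j, hj⟩ := hw
      exact ih f j hj
    · obtain ⟨g, hgi, -, hfg⟩ := exists_legalMove (P := P) (hi ▸ hadj) hw
      obtain ⟨h, hgh⟩ := ih g i hgi
      exact ⟨h, .head (hfg (hP g)) hgh subset_union_right⟩

lemma isMobileConfig_of_forall [Finite V] (hG : G.Connected) (hP : ∀ g : Fin t ↪ V, P (range g))
    (ht : 0 < t) (f : Fin t ↪ V) : IsMobileConfig G P f := by
  have hreach : ∀ f : Fin t ↪ V, ∀ v, ∃ g, Reaches G P f g {v} := fun f v =>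
    let ⟨p⟩ := hG.preconnected (f ⟨0, ht⟩) v
    exists_reaches_of_walk hP p f _ rfl
  obtain ⟨g, hfg⟩ :=
    exists_reaches_univ univ (fun f _ v => by simpa using hreach f v) (mem_univ f)
  exact hfg.isMobileConfig (hP f)

end Robots

section MobileNumbers

variable {G : SimpleGraph V} {P : Set V → Prop} {t : ℕ}

/-- `mobGP G` and `mobMV G` are by definition the suprema of these sets. -/
def mobileSizes (G : SimpleGraph V) (P : Set V → Prop) : Set ℕ :=
  {t | ∃ f : Fin t ↪ V, IsMobileConfig G P f}

variable [Fintype V]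

lemma le_card_of_mem_mobileSizes (ht : t ∈ mobileSizes G P) : t ≤ Fintype.card V := by
  obtain ⟨f, -⟩ := ht
  simpa using Fintype.card_le_of_embedding f

lemma bddAbove_mobileSizes : BddAbove (mobileSizes G P) :=
  ⟨_, fun _ => le_card_of_mem_mobileSizes⟩

lemma exists_embedding_range_eq {α : Type*} (s : Finset α) :
    ∃ f : Fin s.card ↪ α, range f = s :=
  ⟨s.equivFin.symm.toEmbedding.trans (.subtype _), by
    change range (Subtype.val ∘ s.equivFin.symm) = _
    rw [EquivLike.range_comp, Subtype.range_coe]⟩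

lemma sSup_mobileSizes_of_univ (h : P univ) : sSup (mobileSizes G P) = Fintype.card V := by
  obtain ⟨f, hf⟩ := exists_embedding_range_eq (Finset.univ : Finset V)
  rw [Finset.coe_univ] at hf
  refine IsGreatest.csSup_eq ⟨⟨f, ?_⟩, fun _ => le_card_of_mem_mobileSizes⟩
  exact (Reaches.refl (hf ▸ subset_rfl)).isMobileConfig (hf ▸ h)

lemma mobGP_top : mobGP (⊤ : SimpleGraph V) = Fintype.card V :=
  sSup_mobileSizes_of_univ (isGenPosSet_top univ)

lemma mobMV_top [Nonempty V] : mobMV (⊤ : SimpleGraph V) = Fintype.card V :=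
  sSup_mobileSizes_of_univ ((isGenPosSet_top univ).isMutVisSet connected_top)

lemma mobMV_le_card (G : SimpleGraph V) : mobMV G ≤ Fintype.card V :=
  csSup_le' fun _ => le_card_of_mem_mobileSizes

lemma mobGP_le_mobMV (hG : G.Connected) : mobGP G ≤ mobMV G :=
  csSup_le_csSup' bddAbove_mobileSizes fun _ ⟨f, hf⟩ =>
    ⟨f, hf.mono fun _ hS => hS.isMutVisSet hG⟩

lemma le_mobGP (hG : G.Connected) (ht : 0 < t) (ht2 : t ≤ 2) (htV : t ≤ Fintype.card V) :
    t ≤ mobGP G := by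
  obtain ⟨f⟩ : Nonempty (Fin t ↪ V) := Function.Embedding.nonempty_of_card_le (by simpa)
  refine le_csSup bddAbove_mobileSizes ⟨f, isMobileConfig_of_forall hG (fun g => ?_) ht f⟩
  exact isGenPosSet_of_ncard_le_two (finite_range g)
    (by simpa [ncard_range_of_injective g.injective])

end MobileNumbers

abbrev completeSplitGraph (V W : Type*) : SimpleGraph (V ⊕ W) :=
  graphJoin (⊤ : SimpleGraph V) (⊥ : SimpleGraph W)

namespace completeSplitGraph

open Sum

variable {x y : V} {j j' : W} {u v : V ⊕ W} {S : Set (V ⊕ W)}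

@[simp] lemma adj_inl_inl : (completeSplitGraph V W).Adj (inl x) (inl y) ↔ x ≠ y := Iff.rfl

@[simp] lemma adj_inl_inr : (completeSplitGraph V W).Adj (inl x) (inr j) := trivial

@[simp] lemma adj_inr_inl : (completeSplitGraph V W).Adj (inr j) (inl x) := trivial

@[simp] lemma not_adj_inr_inr : ¬(completeSplitGraph V W).Adj (inr j) (inr j') := id

lemma connected [Nonempty V] : (completeSplitGraph V W).Connected := by
  obtain ⟨x₀⟩ := ‹Nonempty V›
  have hx₀ : ∀ u, (completeSplitGraph V W).Reachable u (inl x₀) := by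
    rintro (x | j)
    · rcases eq_or_ne x x₀ with rfl | hx
      · rfl
      · exact (adj_inl_inl.2 hx).reachable
    · exact adj_inr_inl.reachable
  exact (connected_iff _).2 ⟨fun u v => (hx₀ u).trans (hx₀ v).symm, ⟨inl x₀⟩⟩

lemma dist_inr_inr [Nonempty V] (h : j ≠ j') :
    (completeSplitGraph V W).dist (inr j) (inr j') = 2 := by
  obtain ⟨x⟩ := ‹Nonempty V›
  have hle := dist_le (.cons (adj_inr_inl (x := x) (j := j)) (.cons (adj_inl_inr (j := j')) .nil))
  have h0 : (completeSplitGraph V W).dist (inr j) (inr j') ≠ 0 := by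
    simpa [connected.dist_eq_zero_iff] using h
  have h1 : (completeSplitGraph V W).dist (inr j) (inr j') ≠ 1 := by simp [dist_eq_one_iff_adj]
  simp at hle
  omega

lemma exists_inr_of_not_adj (huv : u ≠ v) (hadj : ¬(completeSplitGraph V W).Adj u v) :
    ∃ j j', u = inr j ∧ v = inr j' ∧ j ≠ j' := by
  rcases u with x | j <;> rcases v with y | j'
  · exact absurd (adj_inl_inl.2 fun hxy => huv (congrArg inl hxy)) hadj
  · exact absurd adj_inl_inr hadj
  · exact absurd adj_inr_inl hadj
  · exact ⟨j, j', rfl, rfl, fun hj => huv (congrArg inr hj)⟩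

lemma exists_inr_of_two_le_dist (h : 2 ≤ (completeSplitGraph V W).dist u v) :
    ∃ j j', u = inr j ∧ v = inr j' ∧ j ≠ j' :=
  exists_inr_of_not_adj (by rintro rfl; simp at h)
    fun hadj => by rw [dist_eq_one_iff_adj.2 hadj] at h; omega

lemma dist_le_two [Nonempty V] (u v : V ⊕ W) : (completeSplitGraph V W).dist u v ≤ 2 := by
  by_contra! h
  obtain ⟨j, j', rfl, rfl, hj⟩ := exists_inr_of_two_le_dist h.le
  rw [dist_inr_inr hj] at h
  omega

lemma isGenPosSet_of_subsingleton [Nonempty V] (hS : (inr ⁻¹' S).Subsingleton) :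
    IsGenPosSet (completeSplitGraph V W) S := by
  intro u v p _ hp
  rcases le_or_gt p.length 1 with h1 | h2
  · exact (p.ncard_inter_support_le S).trans (by omega)
  obtain ⟨j, j', rfl, rfl, hj⟩ := exists_inr_of_two_le_dist (hp ▸ h2)
  have hlen : p.length ≤ 2 := hp ▸ dist_le_two _ _
  by_cases hjS : inr j ∈ S
  · have hj'S : inr j' ∉ S := fun hj'S => hj (hS hjS hj'S)
    exact (p.ncard_inter_support_le_length p.end_mem_support hj'S).trans hlen
  · exact (p.ncard_inter_support_le_length p.start_mem_support hjS).trans hlen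

lemma subsingleton_inr_of_isGenPosSet (hS : IsGenPosSet (completeSplitGraph V W) S)
    (hx : inl x ∈ S) : (inr ⁻¹' S).Subsingleton := by
  have : Nonempty V := ⟨x⟩
  intro j hj j' hj'
  by_contra hne
  let p : (completeSplitGraph V W).Walk (inr j) (inr j') :=
    .cons (adj_inr_inl (x := x)) (.cons adj_inl_inr .nil)
  have h3 : 2 < (S ∩ {y | y ∈ p.support}).ncard :=
    (two_lt_ncard_iff (p.support.finite_toSet.inter_of_right S)).2
      ⟨inr j, inl x, inr j', ⟨hj, by simp [p]⟩, ⟨hx, by simp [p]⟩, ⟨hj', by simp [p]⟩,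
        by simp, by simpa, by simp⟩
  exact (hS p (by simp [p, hne]) (by simp [p, dist_inr_inr hne])).not_gt h3

section GenPos

variable [Fintype V] [Finite W]

lemma inl_mem_of_isGenPosSet (hS : IsGenPosSet (completeSplitGraph V W) S)
    (hcard : Fintype.card V < S.ncard) (hy : inl y ∈ S) (x : V) : inl x ∈ S := by
  by_contra hx
  have hsplit : S ⊆ inl '' (inl ⁻¹' S) ∪ inr '' (inr ⁻¹' S) := by
    rintro (z | z) hz <;> simp [hz]
  have hl : (inl ⁻¹' S).ncard < Fintype.card V := by
    rw [← Nat.card_eq_fintype_card]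
    exact ncard_lt_card fun h => hx (h ▸ mem_univ x : x ∈ inl ⁻¹' S)
  have hr : (inr ⁻¹' S).ncard ≤ 1 :=
    ncard_le_one_iff_subsingleton.2 (subsingleton_inr_of_isGenPosSet hS hy)
  have := (ncard_le_ncard hsplit).trans ((ncard_union_le _ _).trans
    (add_le_add (ncard_image_le (f := inl)) (ncard_image_le (f := inr))))
  omega

lemma inl_mem_of_sdiff_subset [Nontrivial V] {S' : Set (V ⊕ W)}
    (hS : IsGenPosSet (completeSplitGraph V W) S) (hS' : IsGenPosSet (completeSplitGraph V W) S')
    (hcard : Fintype.card V < S.ncard) (hcard' : Fintype.card V < S'.ncard) (hx : inl x ∈ S)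
    (hsub : S \ {inl x} ⊆ S') : inl x ∈ S' := by
  obtain ⟨y, hyx⟩ := exists_ne x
  exact inl_mem_of_isGenPosSet hS' hcard'
    (hsub ⟨inl_mem_of_isGenPosSet hS hcard hx y, by simpa using hyx⟩) x

lemma not_legalMove_of_card_lt [Nontrivial V] {t : ℕ} (ht : Fintype.card V < t)
    {f g : Fin t ↪ V ⊕ W} (hf : IsGenPosSet (completeSplitGraph V W) (range f)) :
    ¬LegalMove (completeSplitGraph V W) (IsGenPosSet (completeSplitGraph V W)) f g := by
  rintro ⟨i, hadj, hfree, hfix, hg⟩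
  -- `f i` and `g i` are adjacent, so one of them is a clique vertex; it is vacated by the move
  -- read forwards or backwards, contradicting `inl_mem_of_sdiff_subset`.
  have hcard (h : Fin t ↪ V ⊕ W) : Fintype.card V < (range h).ncard := by
    rwa [ncard_range_of_injective h.injective, Nat.card_fin]
  have hrange := range_eq_insert_sdiff hfix
  rcases hfi : f i with x | j
  · have hsub : range f \ {inl x} ⊆ range g := by
      rw [hrange, ← hfi]
      exact subset_insert _ _
    have := inl_mem_of_sdiff_subset hf hg (hcard f) (hcard g) (hfi ▸ mem_range_self i) hsub
    rw [hrange, ← hfi] at this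
    rcases this with h | ⟨-, h⟩
    · exact hadj.ne h
    · exact h rfl
  · rcases hgi : g i with x' | j'
    · have hsub : range g \ {inl x'} ⊆ range f := by
        rw [hrange, ← hgi, insert_sdiff_self_of_notMem fun h => hfree h.1]
        exact sdiff_subset
      exact hfree (hgi ▸ inl_mem_of_sdiff_subset hg hf (hcard g) (hcard f)
        (hgi ▸ mem_range_self i) hsub)
    · rw [hfi, hgi] at hadj
      exact not_adj_inr_inr hadj

lemma le_card_of_mem_mobileSizes_isGenPosSet [Nontrivial V] [Nontrivial W] {t : ℕ}
    (ht : t ∈ mobileSizes (completeSplitGraph V W) (IsGenPosSet (completeSplitGraph V W))) :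
    t ≤ Fintype.card V := by
  obtain ⟨f, hf, N, c, hc0, hleg, hcov⟩ := ht
  by_contra! hlt
  rcases N.eq_zero_or_pos with rfl | hN
  · have hmem (v : V ⊕ W) : v ∈ range f := by
      obtain ⟨k, hk, i, hi⟩ := hcov v
      obtain rfl : k = 0 := by omega
      exact ⟨i, hc0 ▸ hi⟩
    obtain ⟨x⟩ := (inferInstance : Nonempty V)
    obtain ⟨j, j', hj⟩ := exists_pair_ne W
    exact hj (subsingleton_inr_of_isGenPosSet hf (hmem (inl x)) (hmem (inr j)) (hmem (inr j')))
  · exact not_legalMove_of_card_lt hlt hf (hc0 ▸ hleg 0 hN)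

lemma card_mem_mobileSizes_isGenPosSet [Nonempty V] :
    Fintype.card V ∈
      mobileSizes (completeSplitGraph V W) (IsGenPosSet (completeSplitGraph V W)) := by
  let C := {f : Fin (Fintype.card V) ↪ V ⊕ W | range f = range inl}
  have hC (f) (hf : f ∈ C) : IsGenPosSet (completeSplitGraph V W) (range f) :=
    isGenPosSet_of_subsingleton (by simp [show range f = range inl from hf])
  have htour (f) (hf : f ∈ C) (v : V ⊕ W) : ∃ g ∈ C,
      Reaches (completeSplitGraph V W) (IsGenPosSet (completeSplitGraph V W)) f g {v} := by
    rcases v with x | j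
    · exact ⟨f, hf, .refl (singleton_subset_iff.2 (hf ▸ mem_range_self x))⟩
    obtain ⟨i, hi⟩ : inl (Classical.arbitrary V) ∈ range f := hf ▸ mem_range_self _
    have hfree : inr j ∉ range f := by simp [show range f = range inl from hf]
    obtain ⟨g, hgi, hg, hfg⟩ := exists_legalMove (P := IsGenPosSet (completeSplitGraph V W))
      (hi ▸ adj_inl_inr : (completeSplitGraph V W).Adj (f i) (inr j)) hfree
    have hfg := hfg <| isGenPosSet_of_subsingleton fun a ha b hb => by
      rw [hg, show range f = range inl from hf] at ha hb
      simp only [mem_preimage, mem_insert_iff, inr.injEq, mem_sdiff, mem_range, reduceCtorEq,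
        exists_false, false_and, or_false] at ha hb
      rw [ha, hb]
    exact ⟨f, hf, .head hfg (.head (hfg.symm (hC f hf)) (.refl subset_rfl) subset_rfl)
      (singleton_subset_iff.2 (.inr (.inl ⟨i, hgi⟩)))⟩
  let f₀ : Fin (Fintype.card V) ↪ V ⊕ W := (Fintype.equivFin V).symm.toEmbedding.trans .inl
  have hf₀ : f₀ ∈ C := by
    change range (inl ∘ (Fintype.equivFin V).symm) = _
    rw [EquivLike.range_comp]
  obtain ⟨g, hg⟩ := exists_reaches_univ C htour hf₀
  exact ⟨f₀, hg.isMobileConfig (hC f₀ hf₀)⟩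

theorem mobGP_eq [Nontrivial V] [Nontrivial W] :
    mobGP (completeSplitGraph V W) = Fintype.card V :=
  IsGreatest.csSup_eq
    ⟨card_mem_mobileSizes_isGenPosSet, fun _ => le_card_of_mem_mobileSizes_isGenPosSet⟩

end GenPos

lemma isMutVisSet_of_inl_notMem (hx : inl x ∉ S) : IsMutVisSet (completeSplitGraph V W) S := by
  have : Nonempty V := ⟨x⟩
  intro u _ v _
  rcases eq_or_ne u v with rfl | huv
  · exact ⟨.nil, .nil, by simp, by simp⟩
  by_cases hadj : (completeSplitGraph V W).Adj u v
  · exact ⟨.cons hadj .nil, by simp [huv], by simp [dist_eq_one_iff_adj.2 hadj],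
      fun z hz _ => by simpa using hz⟩
  obtain ⟨j, j', rfl, rfl, hj⟩ := exists_inr_of_not_adj huv hadj
  refine ⟨.cons (adj_inr_inl (x := x)) (.cons adj_inl_inr .nil), by simp [hj],
    by simp [dist_inr_inr hj], fun z hz hzS => ?_⟩
  simp only [Walk.support_cons, Walk.support_nil, List.mem_cons, List.not_mem_nil,
    or_false] at hz
  rcases hz with rfl | rfl | rfl
  · exact .inl rfl
  · exact absurd hzS hx
  · exact .inr rfl

lemma not_isMutVisSet_univ [Nontrivial W] :
    ¬IsMutVisSet (completeSplitGraph V W) univ := by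
  intro h
  obtain ⟨j, j', hj⟩ := exists_pair_ne W
  obtain ⟨p, -, -, hS⟩ := h (mem_univ (inr j)) (mem_univ (inr j'))
  cases p with
  | nil => exact hj rfl
  | @cons _ w _ hadj q =>
    rcases hS w (by simp) (mem_univ w) with rfl | rfl
    · exact hadj.ne rfl
    · exact not_adj_inr_inr hadj

section MutVis

variable [Fintype V] [Fintype W]

lemma mem_mobileSizes_isMutVisSet [Nontrivial V] :
    Fintype.card V + Fintype.card W - 1 ∈
      mobileSizes (completeSplitGraph V W) (IsMutVisSet (completeSplitGraph V W)) := by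
  classical
  obtain ⟨x₀, y, hy⟩ := exists_pair_ne V
  obtain ⟨f, hf⟩ := exists_embedding_range_eq (Finset.univ.erase (inl x₀ : V ⊕ W))
  have hcard : (Finset.univ.erase (inl x₀ : V ⊕ W)).card =
      Fintype.card V + Fintype.card W - 1 := by
    simp [Finset.card_erase_of_mem]
  rw [Finset.coe_erase, Finset.coe_univ] at hf
  obtain ⟨i, hi⟩ : inl y ∈ range f := by simpa [hf] using hy.symm
  obtain ⟨g, hgi, hg, hfg⟩ := exists_legalMove (P := IsMutVisSet (completeSplitGraph V W))
    (hi ▸ adj_inl_inl.2 hy.symm : (completeSplitGraph V W).Adj (f i) (inl x₀)) (by simp [hf])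
  have hfg := hfg (isMutVisSet_of_inl_notMem (x := y) (by simp [hg, hi, hy.symm]))
  refine hcard ▸ ⟨f, (Reaches.head hfg (.refl subset_rfl) fun v _ => ?_).isMobileConfig
    (isMutVisSet_of_inl_notMem (x := x₀) (by simp [hf]))⟩
  by_cases hv : v = inl x₀
  · exact .inr ⟨i, hgi.trans hv.symm⟩
  · exact .inl (hf ▸ ⟨mem_univ v, hv⟩)

lemma lt_card_of_mem_mobileSizes_isMutVisSet [Nontrivial W] {t : ℕ}
    (ht : t ∈ mobileSizes (completeSplitGraph V W) (IsMutVisSet (completeSplitGraph V W))) :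
    t < Fintype.card V + Fintype.card W := by
  obtain ⟨f, hf, -⟩ := ht
  have := ncard_lt_card (s := range f) fun h => not_isMutVisSet_univ (h ▸ hf)
  rwa [ncard_range_of_injective f.injective, Nat.card_fin, Nat.card_sum,
    Nat.card_eq_fintype_card, Nat.card_eq_fintype_card] at this

theorem mobMV_eq [Nontrivial V] [Nontrivial W] :
    mobMV (completeSplitGraph V W) = Fintype.card V + Fintype.card W - 1 :=
  IsGreatest.csSup_eq ⟨mem_mobileSizes_isMutVisSet,
    fun _ ht => Nat.le_sub_one_of_lt (lt_card_of_mem_mobileSizes_isMutVisSet ht)⟩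

end MutVis

end completeSplitGraph

theorem stmt_0 (a b : ℕ) :
    (∃ (V : Type) (_ : Fintype V) (G : SimpleGraph V),
        G.Connected ∧ mobGP G = a ∧ mobMV G = b) ↔
      (a = 1 ∧ b = 1) ∨ (2 ≤ a ∧ a ≤ b) := by
  constructor
  · rintro ⟨V, _, G, hG, rfl, rfl⟩
    have hV : 0 < Fintype.card V := Fintype.card_pos_iff.2 hG.nonempty
    have h1 := le_mobGP hG one_pos one_le_two hV
    have hab := mobGP_le_mobMV hG
    have hb := mobMV_le_card G
    by_cases h2 : 2 ≤ Fintype.card V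
    · have := le_mobGP hG two_pos le_rfl h2
      omega
    · omega
  · intro h
    obtain ⟨ha, rfl⟩ | ⟨ha, hab⟩ : (1 ≤ a ∧ a = b) ∨ (2 ≤ a ∧ a < b) := by omega
    · have : Nonempty (Fin a) := ⟨⟨0, ha⟩⟩
      exact ⟨Fin a, inferInstance, ⊤, connected_top, by simp [mobGP_top], by simp [mobMV_top]⟩
    · have : Nontrivial (Fin a) := Fin.nontrivial_iff_two_le.2 ha
      have : Nontrivial (Fin (b - a + 1)) := Fin.nontrivial_iff_two_le.2 (by omega)
      refine ⟨Fin a ⊕ Fin (b - a + 1), inferInstance, completeSplitGraph _ _,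
        completeSplitGraph.connected, by simp [completeSplitGraph.mobGP_eq], ?_⟩
      rw [completeSplitGraph.mobMV_eq]
      simp only [Fintype.card_fin]
      omega
end

section
/- For all integers r ≥ s ≥ 3, the strong grid P_r ⊠ P_s satisfies mob(P_r ⊠ P_s) = 4. -/
open SimpleGraph

variable {V : Type*} {W : Type*}

/-!
Upper bound: in the coordinates `x + y` and `x - y` the distance of the strong grid, the
Chebyshev distance, is half the `ℓ¹` distance. By the Erdős–Szekeres theorem, any five vertices
contain three that are monotone in both coordinates, and the middle one then lies on a shortest
path between the other two.

Lower bound: two vertical dominoes in the columns `c` and `c + 2` form a general position set.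
A fixed short sequence of legal moves slides them one row down, one row up, or one column to the
right. Sweeping every pair of columns `c, c + 2` down and back up, for `c = 0, …, r - 3`, visits
all vertices when `r ≥ 4`; the `3 × 3` grid has an explicit tour.
-/
namespace SimpleGraph

variable {G : SimpleGraph V} {u v w x y z : V}

lemma Walk.dist_add_dist_of_mem_support {p : G.Walk u v} (hp : p.length = G.dist u v)
    (hw : w ∈ p.support) : G.dist u w + G.dist w v = G.dist u v := by
  classical
  rw [← length_eq_dist_of_subwalk hp (p.isSubwalk_takeUntil hw),
    ← length_eq_dist_of_subwalk hp (p.isSubwalk_dropUntil hw), ← Walk.length_append,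
    p.take_spec hw, hp]

lemma Walk.dist_add_dist_or_of_mem_support {p : G.Walk u v} (hp : p.length = G.dist u v)
    (hx : x ∈ p.support) (hy : y ∈ p.support) :
    G.dist x y + G.dist y v = G.dist x v ∨ G.dist u y + G.dist y x = G.dist u x := by
  classical
  rw [← p.take_spec hx, Walk.mem_support_append_iff] at hy
  rcases hy with hy | hy
  · exact .inr <| dist_add_dist_of_mem_support
      (length_eq_dist_of_subwalk hp (p.isSubwalk_takeUntil hx)) hy
  · exact .inl <| dist_add_dist_of_mem_support
      (length_eq_dist_of_subwalk hp (p.isSubwalk_dropUntil hx)) hy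

lemma Walk.dist_eq_dist_dist_of_mem_support {p : G.Walk u v} (hp : p.length = G.dist u v)
    (hx : x ∈ p.support) (hy : y ∈ p.support) :
    G.dist x y = Nat.dist (G.dist u x) (G.dist u y) := by
  have := dist_add_dist_of_mem_support hp hx
  have := dist_add_dist_of_mem_support hp hy
  have := G.dist_comm (u := x) (v := y)
  rcases dist_add_dist_or_of_mem_support hp hx hy with h | h <;>
    simp only [Nat.dist] <;> omega

lemma Walk.dist_add_dist_eq_of_three_mem_support {p : G.Walk u v} (hp : p.length = G.dist u v)
    (hx : x ∈ p.support) (hy : y ∈ p.support) (hz : z ∈ p.support) :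
    G.dist x y + G.dist y z = G.dist x z ∨ G.dist y x + G.dist x z = G.dist y z ∨
      G.dist x z + G.dist z y = G.dist x y := by
  simp only [dist_eq_dist_dist_of_mem_support hp, Nat.dist, *]
  omega

section DistOfStep

variable {d : V → V → ℕ}

lemma le_length_of_adj_le_add_one (hnil : ∀ v, d v v = 0)
    (hadj : ∀ u w v, G.Adj u w → d u v ≤ d w v + 1) (p : G.Walk u v) : d u v ≤ p.length := by
  induction p with
  | nil => simp [hnil]
  | cons h _ ih => simpa using (hadj _ _ _ h).trans (Nat.add_le_add_right ih 1)

lemma exists_walk_length_eq_of_exists_adj (hnil : ∀ v, d v v = 0)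
    (hstep : ∀ u v, u ≠ v → ∃ w, G.Adj u w ∧ d w v + 1 = d u v) (u v : V) :
    ∃ p : G.Walk u v, p.length = d u v := by
  induction hn : d u v generalizing u with
  | zero =>
    obtain rfl : u = v := by
      by_contra huv
      obtain ⟨w, -, hw⟩ := hstep u v huv
      omega
    exact ⟨.nil, rfl⟩
  | succ n ih =>
    obtain ⟨w, hadj, hw⟩ := hstep u v fun huv => by simp [huv, hnil] at hn
    obtain ⟨p, hp⟩ := ih w (by omega)
    exact ⟨.cons hadj p, by simp [hp]⟩

lemma dist_eq_of_exists_adj (hnil : ∀ v, d v v = 0)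
    (hadj : ∀ u w v, G.Adj u w → d u v ≤ d w v + 1)
    (hstep : ∀ u v, u ≠ v → ∃ w, G.Adj u w ∧ d w v + 1 = d u v) (u v : V) :
    G.dist u v = d u v := by
  obtain ⟨p, hp⟩ := exists_walk_length_eq_of_exists_adj hnil hstep u v
  obtain ⟨q, hq⟩ := Reachable.exists_walk_length_eq_dist ⟨p⟩
  exact le_antisymm (hp ▸ dist_le p) (hq ▸ le_length_of_adj_le_add_one hnil hadj q)

end DistOfStep

end SimpleGraph

theorem isGenPosSet_iff_dist_add_dist_ne {G : SimpleGraph V} (hG : G.Preconnected)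
    {S : Set V} :
    IsGenPosSet G S ↔ ∀ a ∈ S, ∀ b ∈ S, ∀ c ∈ S, a ≠ b → b ≠ c → a ≠ c →
      G.dist a b + G.dist b c ≠ G.dist a c := by
  constructor
  · intro hS a ha b hb c hc hab hbc hac hbtw
    obtain ⟨p, hp⟩ := (hG a b).exists_walk_length_eq_dist
    obtain ⟨q, hq⟩ := (hG b c).exists_walk_length_eq_dist
    have hpq : (p.append q).length = G.dist a c := by rw [Walk.length_append]; omega
    have hsub : {a, b, c} ⊆ S ∩ {x | x ∈ (p.append q).support} := by
      rintro x (rfl | rfl | rfl) <;> simp [Walk.mem_support_append_iff, *]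
    have := Set.ncard_le_ncard hsub
      ((p.append q).support.finite_toSet.subset Set.inter_subset_right)
    rw [Set.ncard_eq_three.mpr ⟨a, b, c, hab, hac, hbc, rfl⟩] at this
    have := hS (p.append q) (Walk.isPath_of_length_eq_dist _ hpq) hpq
    omega
  · intro h u v p _ hp
    by_contra! hlt
    obtain ⟨a, ⟨ha, hap⟩, b, ⟨hb, hbp⟩, c, ⟨hc, hcp⟩, hab, hac, hbc⟩ :=
      (Set.two_lt_ncard (p.support.finite_toSet.subset Set.inter_subset_right)).mp hlt
    rcases Walk.dist_add_dist_eq_of_three_mem_support hp hap hbp hcp with H | H | H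
    · exact h a ha b hb c hc hab hbc hac H
    · exact h b hb a ha c hc hab.symm hac hbc H
    · exact h a ha c hc b hb hac hbc.symm hab H

section Moves

variable {G : SimpleGraph V} {P : Set V → Prop} {t : ℕ}

/-- `MovesTo G P f g A`: a sequence of legal moves leads from `f` to `g` and every vertex of `A`
is occupied at some moment. -/
inductive MovesTo (G : SimpleGraph V) (P : Set V → Prop) :
    (Fin t ↪ V) → (Fin t ↪ V) → Set V → Prop
  | refl (f : Fin t ↪ V) : MovesTo G P f f (Set.range f)
  | tail {f g h : Fin t ↪ V} {A : Set V} :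
      MovesTo G P f g A → LegalMove G P g h → MovesTo G P f h (A ∪ Set.range h)
  | mono {f g : Fin t ↪ V} {A B : Set V} : MovesTo G P f g A → B ⊆ A → MovesTo G P f g B

namespace MovesTo

variable {f g h : Fin t ↪ V} {A B : Set V}

lemma single (hm : LegalMove G P f g) : MovesTo G P f g (Set.range f ∪ Set.range g) :=
  (refl f).tail hm

lemma union_range (hfg : MovesTo G P f g A) : MovesTo G P f g (A ∪ Set.range g) := by
  induction hfg with
  | refl => exact (refl f).mono (Set.union_subset le_rfl le_rfl)
  | tail hfg hm _ => exact (hfg.tail hm).mono (Set.union_subset le_rfl Set.subset_union_right)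
  | mono _ hBA ih => exact ih.mono (Set.union_subset_union_left _ hBA)

lemma trans (hfg : MovesTo G P f g A) (hgh : MovesTo G P g h B) :
    MovesTo G P f h (A ∪ B) := by
  induction hgh with
  | refl => exact hfg.union_range
  | tail _ hm ih => exact (ih.tail hm).mono (Set.union_assoc A _ _).ge
  | mono _ hBA ih => exact ih.mono (Set.union_subset_union_right _ hBA)

lemma exists_seq (hfg : MovesTo G P f g A) :
    ∃ (N : ℕ) (c : ℕ → (Fin t ↪ V)), c 0 = f ∧ c N = g ∧
      (∀ k < N, LegalMove G P (c k) (c (k + 1))) ∧ ∀ v ∈ A, ∃ k ≤ N, ∃ i, c k i = v := by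
  induction hfg with
  | refl => exact ⟨0, fun _ => f, rfl, rfl, by simp, fun v ⟨i, hi⟩ => ⟨0, le_rfl, i, hi⟩⟩
  | @tail g h A _ hm ih =>
    obtain ⟨N, c, hc0, hcN, hmoves, hvis⟩ := ih
    refine ⟨N + 1, fun k => if k ≤ N then c k else h, by simp [hc0], by simp, ?_, ?_⟩
    · intro k hk
      rcases Nat.lt_or_eq_of_le (Nat.le_of_lt_succ hk) with hk | rfl
      · simpa [hk.le, Nat.succ_le_of_lt hk] using hmoves k hk
      · simpa [hcN] using hm
    · rintro v (hv | ⟨i, rfl⟩)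
      · obtain ⟨k, hk, i, rfl⟩ := hvis v hv
        exact ⟨k, by omega, i, by simp [hk]⟩
      · exact ⟨N + 1, le_rfl, i, by simp⟩
  | mono _ hBA ih =>
    obtain ⟨N, c, hc0, hcN, hmoves, hvis⟩ := ih
    exact ⟨N, c, hc0, hcN, hmoves, fun v hv => hvis v (hBA hv)⟩

lemma isMobileConfig (hf : P (Set.range f)) (hfg : MovesTo G P f g Set.univ) :
    IsMobileConfig G P f := by
  obtain ⟨N, c, hc0, -, hmoves, hvis⟩ := hfg.exists_seq
  exact ⟨hf, N, c, hc0, hmoves, fun v => hvis v trivial⟩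

end MovesTo

end Moves

section StrongGrid

variable {r s : ℕ}

abbrev strongGrid (r s : ℕ) : SimpleGraph (Fin r × Fin s) :=
  strongProd (pathGraph r) (pathGraph s)

def gridPt (u : Fin r × Fin s) : ℕ × ℕ := (u.1, u.2)

lemma gridPt_injective : Function.Injective (gridPt : Fin r × Fin s → ℕ × ℕ) := by
  rintro ⟨a, b⟩ ⟨c, d⟩ h
  simp only [gridPt, Prod.mk.injEq, Fin.val_inj] at h
  rw [h.1, h.2]

def chebDist (x y : ℕ × ℕ) : ℕ := max (Nat.dist x.1 y.1) (Nat.dist x.2 y.2)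

@[simp] lemma chebDist_add_left (o x y : ℕ × ℕ) : chebDist (o + x) (o + y) = chebDist x y := by
  simp [chebDist, Nat.dist_add_add_left]

lemma chebDist_triangle (x y z : ℕ × ℕ) : chebDist x z ≤ chebDist x y + chebDist y z := by
  have := Nat.dist.triangle_inequality x.1 y.1 z.1
  have := Nat.dist.triangle_inequality x.2 y.2 z.2
  simp only [chebDist]
  omega

lemma strongGrid_adj_iff {u v : Fin r × Fin s} :
    (strongGrid r s).Adj u v ↔ chebDist (gridPt u) (gridPt v) = 1 := by
  obtain ⟨⟨a, _⟩, ⟨b, _⟩⟩ := u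
  obtain ⟨⟨c, _⟩, ⟨d, _⟩⟩ := v
  simp only [strongProd, pathGraph_adj, chebDist, gridPt, Nat.dist, Fin.mk.injEq]
  omega

lemma Fin.exists_dist_eq_min_one_and_dist_eq_pred {n : ℕ} (a b : Fin n) :
    ∃ c : Fin n, Nat.dist a c = min 1 (Nat.dist a b) ∧ Nat.dist c b = Nat.dist a b - 1 := by
  rcases lt_trichotomy a b with h | rfl | h
  · exact ⟨⟨a + 1, by omega⟩, by simp only [Nat.dist]; omega, by simp only [Nat.dist]; omega⟩
  · exact ⟨a, by simp, by simp⟩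
  · exact ⟨⟨a - 1, by omega⟩, by simp only [Nat.dist]; omega, by simp only [Nat.dist]; omega⟩

lemma strongGrid_exists_adj_chebDist (u v : Fin r × Fin s) (huv : u ≠ v) :
    ∃ w, (strongGrid r s).Adj u w ∧
      chebDist (gridPt w) (gridPt v) + 1 = chebDist (gridPt u) (gridPt v) := by
  obtain ⟨c, hc1, hc2⟩ := Fin.exists_dist_eq_min_one_and_dist_eq_pred u.1 v.1
  obtain ⟨d, hd1, hd2⟩ := Fin.exists_dist_eq_min_one_and_dist_eq_pred u.2 v.2
  have hne : chebDist (gridPt u) (gridPt v) ≠ 0 := by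
    intro h
    rw [chebDist] at h
    exact huv <| gridPt_injective <|
      Prod.ext (Nat.eq_of_dist_eq_zero (by omega)) (Nat.eq_of_dist_eq_zero (by omega))
  refine ⟨(c, d), strongGrid_adj_iff.mpr ?_, ?_⟩ <;>
    simp only [chebDist, gridPt] at hne ⊢ <;> omega

lemma strongGrid_dist (u v : Fin r × Fin s) :
    (strongGrid r s).dist u v = chebDist (gridPt u) (gridPt v) :=
  SimpleGraph.dist_eq_of_exists_adj (by simp [chebDist])
    (fun u w v h => (chebDist_triangle _ (gridPt w) _).trans
      (by rw [strongGrid_adj_iff.mp h, add_comm])) strongGrid_exists_adj_chebDist u v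

lemma strongGrid_preconnected : (strongGrid r s).Preconnected := fun u v =>
  have ⟨p, _⟩ := SimpleGraph.exists_walk_length_eq_of_exists_adj (d := fun u v =>
    chebDist (gridPt u) (gridPt v)) (by simp [chebDist]) strongGrid_exists_adj_chebDist u v
  ⟨p⟩

end StrongGrid

section UpperBound

variable {r s t : ℕ}

/-- The case `5 = 2 · 2 + 1` of the Erdős–Szekeres theorem. -/
lemma exists_lt_lt_between (x : Fin 5 → ℤ) : ∃ i j k : Fin 5, i < j ∧ j < k ∧
    (x i ≤ x j ∧ x j ≤ x k ∨ x k ≤ x j ∧ x j ≤ x i) := by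
  by_contra! h
  have := h 0 1 2 (by decide) (by decide)
  have := h 0 1 3 (by decide) (by decide)
  have := h 1 2 3 (by decide) (by decide)
  have := h 1 3 4 (by decide) (by decide)
  have := h 2 3 4 (by decide) (by decide)
  omega

lemma two_mul_chebDist (x y : ℕ × ℕ) : 2 * chebDist x y =
    Nat.dist (x.1 + x.2) (y.1 + y.2) + ((x.1 : ℤ) - x.2 - (y.1 - y.2)).natAbs := by
  simp only [chebDist, Nat.dist]
  omega

lemma chebDist_add_chebDist_eq {x y z : ℕ × ℕ} (h₁ : x.1 + x.2 ≤ y.1 + y.2)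
    (h₂ : y.1 + y.2 ≤ z.1 + z.2)
    (h₃ : ((x.1 : ℤ) - x.2 ≤ y.1 - y.2 ∧ (y.1 : ℤ) - y.2 ≤ z.1 - z.2) ∨
      ((z.1 : ℤ) - z.2 ≤ y.1 - y.2 ∧ (y.1 : ℤ) - y.2 ≤ x.1 - x.2)) :
    chebDist x y + chebDist y z = chebDist x z := by
  have := two_mul_chebDist x y
  have := two_mul_chebDist y z
  have := two_mul_chebDist x z
  have : Nat.dist (x.1 + x.2) (y.1 + y.2) + Nat.dist (y.1 + y.2) (z.1 + z.2) =
      Nat.dist (x.1 + x.2) (z.1 + z.2) := by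
    simp only [Nat.dist]
    omega
  have : ((x.1 : ℤ) - x.2 - (y.1 - y.2)).natAbs + ((y.1 : ℤ) - y.2 - (z.1 - z.2)).natAbs =
      ((x.1 : ℤ) - x.2 - (z.1 - z.2)).natAbs := by
    omega
  omega

lemma exists_chebDist_add_chebDist_eq (w : Fin 5 → ℕ × ℕ) : ∃ a b c : Fin 5,
    a ≠ b ∧ b ≠ c ∧ a ≠ c ∧ chebDist (w a) (w b) + chebDist (w b) (w c) = chebDist (w a) (w c) := by
  let σ := Tuple.sort fun i => (w i).1 + (w i).2
  have hσ := Tuple.monotone_sort fun i => (w i).1 + (w i).2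
  obtain ⟨i, j, k, hij, hjk, hbtw⟩ :=
    exists_lt_lt_between fun i => ((w (σ i)).1 : ℤ) - (w (σ i)).2
  exact ⟨σ i, σ j, σ k, σ.injective.ne hij.ne, σ.injective.ne hjk.ne,
    σ.injective.ne (hij.trans hjk).ne, chebDist_add_chebDist_eq (hσ hij.le) (hσ hjk.le) hbtw⟩

lemma le_four_of_isGenPosSet (f : Fin t ↪ Fin r × Fin s)
    (hf : IsGenPosSet (strongGrid r s) (Set.range f)) : t ≤ 4 := by
  by_contra! ht
  let w : Fin 5 ↪ Fin r × Fin s := (Fin.castLEEmb ht).trans f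
  obtain ⟨a, b, c, hab, hbc, hac, hbtw⟩ := exists_chebDist_add_chebDist_eq (gridPt ∘ w)
  refine (isGenPosSet_iff_dist_add_dist_ne strongGrid_preconnected).mp hf
    (w a) ⟨_, rfl⟩ (w b) ⟨_, rfl⟩ (w c) ⟨_, rfl⟩
    (w.injective.ne hab) (w.injective.ne hbc) (w.injective.ne hac) ?_
  simpa only [strongGrid_dist, Function.comp_apply] using hbtw

end UpperBound

section Patterns

variable {r s t : ℕ}

/- Configurations of robots are handled as point patterns in `ℕ × ℕ`, placed into the grid by a
translation; general position and legal moves of patterns are decidable, so the explicit move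
sequences below are checked by `decide`. -/

def IsChebGenPos (P : Fin t → ℕ × ℕ) : Prop :=
  ∀ i j k, i ≠ j → j ≠ k → i ≠ k →
    chebDist (P i) (P j) + chebDist (P j) (P k) ≠ chebDist (P i) (P k)

instance (P : Fin t → ℕ × ℕ) : Decidable (IsChebGenPos P) := by
  unfold IsChebGenPos; infer_instance

def PatternMove (P Q : Fin t → ℕ × ℕ) : Prop :=
  ∃ i, chebDist (P i) (Q i) = 1 ∧ (∀ j, Q i ≠ P j) ∧ (∀ j, j ≠ i → Q j = P j) ∧ IsChebGenPos Q

instance (P Q : Fin t → ℕ × ℕ) : Decidable (PatternMove P Q) := by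
  unfold PatternMove; infer_instance

lemma PatternMove.injective {P Q : Fin t → ℕ × ℕ} (hPQ : PatternMove P Q)
    (hP : Function.Injective P) : Function.Injective Q := by
  obtain ⟨i, -, hfresh, hfix, -⟩ := hPQ
  intro j k hjk
  by_cases hj : j = i <;> by_cases hk : k = i
  · rw [hj, hk]
  · subst hj; exact absurd (hjk.trans (hfix k hk)) (hfresh k)
  · subst hk; exact absurd (hjk.symm.trans (hfix j hj)) (hfresh j)
  · exact hP (by rw [← hfix j hj, ← hfix k hk, hjk])

lemma eq_of_gridPt_comp_eq {f g : Fin t ↪ Fin r × Fin s} (h : gridPt ∘ f = gridPt ∘ g) :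
    f = g :=
  DFunLike.ext f g fun i => gridPt_injective (congrFun h i)

lemma exists_gridPt_comp_eq {o : ℕ × ℕ} {P : Fin t → ℕ × ℕ} (hP : Function.Injective P)
    (hfit : ∀ i, (o + P i).1 < r ∧ (o + P i).2 < s) :
    ∃ f : Fin t ↪ Fin r × Fin s, gridPt ∘ f = o +ᵥ P := by
  let f i : Fin r × Fin s := (⟨_, (hfit i).1⟩, ⟨_, (hfit i).2⟩)
  have hf : gridPt ∘ f = o +ᵥ P := rfl
  exact ⟨⟨f, fun i j h => hP (add_left_cancel (congrArg gridPt h : o + P i = o + P j))⟩, hf⟩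

lemma isGenPosSet_range_of_gridPt_comp_eq {f : Fin t ↪ Fin r × Fin s} {o : ℕ × ℕ}
    {P : Fin t → ℕ × ℕ} (hf : gridPt ∘ f = o +ᵥ P) (hP : IsChebGenPos P) :
    IsGenPosSet (strongGrid r s) (Set.range f) := by
  rw [isGenPosSet_iff_dist_add_dist_ne strongGrid_preconnected]
  rintro _ ⟨i, rfl⟩ _ ⟨j, rfl⟩ _ ⟨k, rfl⟩ hij hjk hik
  have hfi i : gridPt (f i) = o + P i := congrFun hf i
  simp only [strongGrid_dist, hfi, chebDist_add_left]
  exact hP i j k (ne_of_apply_ne f hij) (ne_of_apply_ne f hjk) (ne_of_apply_ne f hik)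

lemma exists_legalMove_of_patternMove {f : Fin t ↪ Fin r × Fin s} {o : ℕ × ℕ}
    {P Q : Fin t → ℕ × ℕ} (hf : gridPt ∘ f = o +ᵥ P) (hPQ : PatternMove P Q)
    (hfit : ∀ i, (o + Q i).1 < r ∧ (o + Q i).2 < s) :
    ∃ g : Fin t ↪ Fin r × Fin s, gridPt ∘ g = o +ᵥ Q ∧
      LegalMove (strongGrid r s) (IsGenPosSet (strongGrid r s)) f g := by
  have hfi i : gridPt (f i) = o + P i := congrFun hf i
  have hP : Function.Injective P := fun i j h =>
    f.injective (gridPt_injective (by rw [hfi, hfi, h]))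
  obtain ⟨g, hg⟩ := exists_gridPt_comp_eq (hPQ.injective hP) hfit
  have hgi i : gridPt (g i) = o + Q i := congrFun hg i
  obtain ⟨i, hadj, hfresh, hfix, hQ⟩ := hPQ
  refine ⟨g, hg, i, ?_, ?_, fun j hj => gridPt_injective ?_,
    isGenPosSet_range_of_gridPt_comp_eq hg hQ⟩
  · rw [strongGrid_adj_iff, hfi, hgi, chebDist_add_left, hadj]
  · rintro ⟨j, hj⟩
    exact hfresh j (add_left_cancel (by rw [← hfi, ← hgi, hj]))
  · rw [hfi, hgi, hfix j hj]

lemma exists_movesTo_of_isChain {w h : ℕ} {o : ℕ × ℕ} {L : List (Fin t → ℕ × ℕ)}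
    (hne : L ≠ []) (hL : L.IsChain PatternMove)
    (hbox : ∀ Q ∈ L, ∀ i, (Q i).1 < w ∧ (Q i).2 < h) (hw : o.1 + w ≤ r) (hh : o.2 + h ≤ s)
    {f : Fin t ↪ Fin r × Fin s} (hf : gridPt ∘ f = o +ᵥ L.head hne) :
    ∃ g : Fin t ↪ Fin r × Fin s, gridPt ∘ g = o +ᵥ L.getLast hne ∧
      MovesTo (strongGrid r s) (IsGenPosSet (strongGrid r s)) f g
        {v | ∃ Q ∈ L, ∃ i, gridPt v = o + Q i} := by
  induction L generalizing f with
  | nil => contradiction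
  | cons P L ih =>
    have hvis_head : {v | ∃ i, gridPt v = o + P i} ⊆ Set.range f := fun v ⟨i, hv⟩ =>
      ⟨i, gridPt_injective (by rw [hv]; exact congrFun hf i)⟩
    cases L with
    | nil =>
      refine ⟨f, hf, (MovesTo.refl f).mono ?_⟩
      rintro v ⟨Q, hQ, hv⟩
      rw [List.mem_singleton.mp hQ] at hv
      exact hvis_head hv
    | cons Q L =>
      obtain ⟨hPQ, hL⟩ := List.isChain_cons_cons.mp hL
      obtain ⟨g, hg, hfg⟩ := exists_legalMove_of_patternMove hf hPQ fun i => by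
        have := hbox Q (by simp) i
        simp only [Prod.fst_add, Prod.snd_add]
        omega
      obtain ⟨g', hg', hgg'⟩ := ih (List.cons_ne_nil _ _) hL
        (fun Q' hQ' => hbox Q' (List.mem_cons_of_mem _ hQ')) hg
      refine ⟨g', hg', ((MovesTo.single hfg).trans hgg').mono ?_⟩
      rintro v ⟨Q', hQ', hv⟩
      rcases List.mem_cons.mp hQ' with rfl | hQ'
      · exact .inl (.inl (hvis_head hv))
      · exact .inr ⟨Q', hQ', hv⟩

lemma subset_setOf_gridPt_eq {o : ℕ × ℕ} {L : List (Fin t → ℕ × ℕ)} {K : Finset (ℕ × ℕ)}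
    (hK : ∀ x ∈ K, ∃ Q ∈ L, ∃ i, Q i = x) :
    {v : Fin r × Fin s | o ≤ gridPt v ∧ gridPt v - o ∈ K} ⊆
      {v | ∃ Q ∈ L, ∃ i, gridPt v = o + Q i} := by
  rintro v ⟨hle, hv⟩
  obtain ⟨Q, hQ, i, hi⟩ := hK _ hv
  exact ⟨Q, hQ, i, by rw [hi, add_tsub_cancel_of_le hle]⟩

end Patterns

section Sweep

variable {r s : ℕ}

def dominoPair : Fin 4 → ℕ × ℕ := ![(0, 0), (0, 1), (2, 0), (2, 1)]

def dominoDownWalk : List (Fin 4 → ℕ × ℕ) :=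
  [dominoPair, ![(0, 0), (0, 2), (2, 0), (2, 1)], ![(0, 0), (0, 2), (2, 0), (2, 2)],
    ![(0, 0), (0, 2), (2, 1), (2, 2)], (0, 1) +ᵥ dominoPair]

def dominoRightWalk : List (Fin 4 → ℕ × ℕ) :=
  [dominoPair, ![(0, 0), (0, 2), (2, 0), (2, 1)], ![(0, 0), (0, 2), (2, 0), (2, 2)],
    ![(0, 0), (0, 2), (3, 0), (2, 2)], ![(1, 0), (0, 2), (3, 0), (2, 2)],
    ![(1, 0), (0, 2), (3, 0), (3, 1)], (1, 0) +ᵥ dominoPair]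

def tour3x3 : List (Fin 4 → ℕ × ℕ) :=
  [dominoPair, ![(0, 0), (0, 2), (2, 0), (2, 1)], ![(0, 0), (0, 2), (2, 0), (2, 2)],
    ![(0, 0), (0, 2), (2, 0), (2, 1)], ![(0, 0), (0, 2), (2, 0), (1, 2)],
    ![(0, 0), (0, 2), (2, 0), (2, 1)], ![(1, 0), (0, 2), (2, 0), (2, 1)],
    ![(1, 0), (1, 1), (2, 0), (2, 1)]]

lemma movesTo_dominoPair_down {c a : ℕ} (hc : c + 3 ≤ r) (ha : a + 3 ≤ s)
    {f : Fin 4 ↪ Fin r × Fin s} (hf : gridPt ∘ f = (c, a) +ᵥ dominoPair) :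
    ∃ g : Fin 4 ↪ Fin r × Fin s, gridPt ∘ g = (c, a + 1) +ᵥ dominoPair ∧
      MovesTo (strongGrid r s) (IsGenPosSet (strongGrid r s)) f g
        {v | (v.1.val = c ∨ v.1.val = c + 2) ∧ a ≤ v.2.val ∧ v.2.val ≤ a + 2} := by
  obtain ⟨g, hg, hfg⟩ := exists_movesTo_of_isChain (L := dominoDownWalk) (w := 3) (h := 3)
    (by decide) (by decide) (by decide) hc ha hf
  refine ⟨g, ?_, hfg.mono ((subset_setOf_gridPt_eq (K := {0, 2} ×ˢ Finset.range 3)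
    (by decide)).trans' fun v hv => ?_)⟩
  · rw [show ((c, a + 1) : ℕ × ℕ) = (c, a) + (0, 1) by simp, ← vadd_vadd]
    exact hg
  simp only [Set.mem_ofPred_eq, gridPt, Prod.mk_le_mk, Prod.mk_sub_mk, Finset.mem_product,
    Finset.mem_insert, Finset.mem_singleton, Finset.mem_range] at hv ⊢
  omega

lemma movesTo_dominoPair_up {c a : ℕ} (hc : c + 3 ≤ r) (ha : a + 3 ≤ s)
    {f g : Fin 4 ↪ Fin r × Fin s} (hf : gridPt ∘ f = (c, a + 1) +ᵥ dominoPair)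
    (hg : gridPt ∘ g = (c, a) +ᵥ dominoPair) :
    MovesTo (strongGrid r s) (IsGenPosSet (strongGrid r s)) f g ∅ := by
  rw [show ((c, a + 1) : ℕ × ℕ) = (c, a) + (0, 1) by simp, ← vadd_vadd] at hf
  obtain ⟨g', hg', hfg'⟩ := exists_movesTo_of_isChain (L := dominoDownWalk.reverse) (w := 3)
    (h := 3) (by decide) (by decide) (by decide) hc ha hf
  obtain rfl : g' = g := eq_of_gridPt_comp_eq (hg'.trans hg.symm)
  exact hfg'.mono (Set.empty_subset _)

lemma movesTo_dominoPair_right {c : ℕ} (hc : c + 4 ≤ r) (hs : 3 ≤ s)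
    {f : Fin 4 ↪ Fin r × Fin s} (hf : gridPt ∘ f = (c, 0) +ᵥ dominoPair) :
    ∃ g : Fin 4 ↪ Fin r × Fin s, gridPt ∘ g = (c + 1, 0) +ᵥ dominoPair ∧
      MovesTo (strongGrid r s) (IsGenPosSet (strongGrid r s)) f g ∅ := by
  obtain ⟨g, hg, hfg⟩ := exists_movesTo_of_isChain (L := dominoRightWalk) (w := 4) (h := 3)
    (by decide) (by decide) (by decide) hc hs hf
  refine ⟨g, ?_, hfg.mono (Set.empty_subset _)⟩
  rw [show ((c + 1, 0) : ℕ × ℕ) = (c, 0) + (1, 0) by simp, ← vadd_vadd]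
  exact hg

lemma movesTo_column_round_trip {c : ℕ} (hc : c + 3 ≤ r) :
    ∀ n a, a + 2 + n = s → ∀ {f : Fin 4 ↪ Fin r × Fin s},
      gridPt ∘ f = (c, a) +ᵥ dominoPair →
      MovesTo (strongGrid r s) (IsGenPosSet (strongGrid r s)) f f
        {v | (v.1.val = c ∨ v.1.val = c + 2) ∧ a ≤ v.2.val}
  | 0, a, ha, f, hf => by
    obtain ⟨g, hg, hfg⟩ := exists_movesTo_of_isChain (L := [dominoPair]) (w := 3) (h := 2)
      (by decide) (by decide) (by decide) hc (by omega) hf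
    obtain rfl : g = f := eq_of_gridPt_comp_eq (hg.trans hf.symm)
    refine hfg.mono ((subset_setOf_gridPt_eq (K := {0, 2} ×ˢ Finset.range 2)
      (by decide)).trans' fun v hv => ?_)
    have := v.2.isLt
    simp only [Set.mem_ofPred_eq, gridPt, Prod.mk_le_mk, Prod.mk_sub_mk, Finset.mem_product,
      Finset.mem_insert, Finset.mem_singleton, Finset.mem_range] at hv ⊢
    omega
  | n + 1, a, ha, f, hf => by
    obtain ⟨g, hg, hfg⟩ := movesTo_dominoPair_down hc (by omega) hf
    refine ((hfg.trans (movesTo_column_round_trip hc n (a + 1) (by omega) hg)).trans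
      (movesTo_dominoPair_up hc (by omega) hg hf)).mono fun v ⟨hx, hy⟩ => ?_
    by_cases hy' : v.2.val ≤ a + 2
    · exact .inl (.inl ⟨hx, hy, hy'⟩)
    · exact .inl (.inr ⟨hx, by omega⟩)

lemma movesTo_sweep (hs : 3 ≤ s) {f : Fin 4 ↪ Fin r × Fin s}
    (hf : gridPt ∘ f = (0, 0) +ᵥ dominoPair) : ∀ c, c + 3 ≤ r →
    ∃ g : Fin 4 ↪ Fin r × Fin s, gridPt ∘ g = (c, 0) +ᵥ dominoPair ∧
      MovesTo (strongGrid r s) (IsGenPosSet (strongGrid r s)) f g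
        {v | ∃ c' ≤ c, v.1.val = c' ∨ v.1.val = c' + 2}
  | 0, hc => ⟨f, hf, (movesTo_column_round_trip hc (s - 2) 0 (by omega) hf).mono
      fun v hv => (by simpa using hv)⟩
  | c + 1, hc => by
    obtain ⟨g, hg, hfg⟩ := movesTo_sweep hs hf c (by omega)
    obtain ⟨g', hg', hgg'⟩ := movesTo_dominoPair_right (by omega) hs hg
    refine ⟨g', hg', ((hfg.trans hgg').trans
      (movesTo_column_round_trip hc (s - 2) 0 (by omega) hg')).mono fun v hv => ?_⟩
    obtain ⟨c', hc', hv⟩ := hv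
    rcases Nat.lt_or_eq_of_le hc' with hc' | rfl
    · exact .inl (.inl ⟨c', by omega, hv⟩)
    · exact .inr ⟨hv, Nat.zero_le _⟩

lemma exists_isMobileConfig_four (hs : 3 ≤ s) (hsr : s ≤ r) :
    ∃ f : Fin 4 ↪ Fin r × Fin s,
      IsMobileConfig (strongGrid r s) (IsGenPosSet (strongGrid r s)) f := by
  obtain ⟨f, hf⟩ := exists_gridPt_comp_eq (o := (0, 0)) (P := dominoPair) (r := r) (s := s)
    (by decide) fun i => by fin_cases i <;> simp [dominoPair] <;> omega
  suffices ∃ g, MovesTo (strongGrid r s) (IsGenPosSet (strongGrid r s)) f g Set.univ from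
    have ⟨g, hfg⟩ := this
    ⟨f, hfg.isMobileConfig (isGenPosSet_range_of_gridPt_comp_eq hf (by decide))⟩
  rcases (by omega : r = 3 ∨ 4 ≤ r) with rfl | hr
  · obtain rfl : s = 3 := by omega
    obtain ⟨g, -, hfg⟩ := exists_movesTo_of_isChain (L := tour3x3) (w := 3) (h := 3)
      (o := (0, 0)) (by decide) (by decide) (by decide) le_rfl le_rfl hf
    exact ⟨g, hfg.mono fun v _ => by fin_cases v <;> decide⟩
  · obtain ⟨g, -, hfg⟩ := movesTo_sweep hs hf (r - 3) (by omega)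
    refine ⟨g, hfg.mono fun v _ => ?_⟩
    by_cases hv : v.1.val ≤ r - 3
    · exact ⟨v.1, hv, .inl rfl⟩
    · exact ⟨v.1 - 2, by omega, .inr (by omega)⟩

end Sweep

theorem stmt_7 (r s : ℕ) (hs : 3 ≤ s) (hsr : s ≤ r) :
    mobGP (strongProd (pathGraph r) (pathGraph s)) = 4 := by
  refine IsGreatest.csSup_eq ⟨exists_isMobileConfig_four hs hsr, ?_⟩
  rintro t ⟨f, hf⟩
  exact le_four_of_isGenPosSet f hf.1
end
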